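/- Let Λ ⊆ Δ_n^↓ be nonempty and compact. Then for every x ∈ Λ there exists a maximal element x_M of Λ (with respect to majorization) such that x ≺ x_M. -/
import Mathlib


open Finset Set

/-- Partial sum of the first `k` components. -/
def pSum {n : ℕ} (x : Fin n → ℝ) (k : ℕ) : ℝ :=
  ∑ i : Fin n, if (i : ℕ) < k then x i else 0

/-- Majorization: all partial sums of `x` are bounded by those of `y`. -/
def Maj {n : ℕ} (x y : Fin n → ℝ) : Prop :=
  ∀ k : ℕ, pSum x k ≤ pSum y k

/-- The ordered probability simplex Δ_n^↓. -/
def OrderedSimplex (n : ℕ) : Set (Fin n → ℝ) :=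
  {x | (∀ i j : Fin n, i ≤ j → x j ≤ x i) ∧ (∀ i, 0 ≤ x i) ∧ ∑ i, x i = 1}

/-- Euclidean dot product on `Fin n → ℝ`. -/
def dotp {n : ℕ} (x v : Fin n → ℝ) : ℝ := ∑ i, x i * v i

lemma pSum_cont {n : ℕ} (k : ℕ) : Continuous fun z : Fin n → ℝ => pSum z k := by
  unfold pSum
  refine continuous_finset_sum _ (fun i _ => ?_)
  by_cases h : (i : ℕ) < k <;> simp [h]
  · exact continuous_apply i
  · exact continuous_const

lemma pSum_succ {n : ℕ} (x : Fin n → ℝ) (k : ℕ) (h : k < n) :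
    pSum x (k + 1) = pSum x k + x ⟨k, h⟩ := by
  unfold pSum
  have step : ∀ i : Fin n, (if (i:ℕ) < k + 1 then x i else 0) =
      (if (i:ℕ) < k then x i else 0) + (if (i:ℕ) = k then x i else 0) := by
    intro i
    rcases lt_trichotomy (i:ℕ) k with hi | hi | hi
    · simp [hi, Nat.lt_succ_of_lt hi, Nat.ne_of_lt hi]
    · simp [hi]
    · simp [Nat.lt_irrefl, not_lt_of_gt hi, Nat.lt_succ_iff, not_le_of_gt hi, Nat.ne_of_gt hi]
  rw [Finset.sum_congr rfl (fun i _ => step i), Finset.sum_add_distrib]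
  have hsingle : (∑ i : Fin n, if (i:ℕ) = k then x i else 0) = x ⟨k, h⟩ := by
    rw [Finset.sum_eq_single_of_mem (⟨k, h⟩ : Fin n) (Finset.mem_univ _)]
    · simp
    · intro b _ hb
      simp [show (b:ℕ) ≠ k from fun e => hb (Fin.ext e)]
  rw [hsingle]

theorem stmt_4 {n : ℕ} (Λ : Set (Fin n → ℝ))
    (hΛ : Λ ⊆ OrderedSimplex n) (hne : Λ.Nonempty) (hc : IsCompact Λ)
    (x : Fin n → ℝ) (hx : x ∈ Λ) :
    ∃ M ∈ Λ, Maj x M ∧ ∀ z ∈ Λ, Maj M z → z = M := by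
  set S : Set (Fin n → ℝ) := Λ ∩ {z | Maj x z} with hS
  have hSc : IsCompact S := by
    refine hc.inter_right ?_
    have : {z : Fin n → ℝ | Maj x z} = ⋂ k : ℕ, {z | pSum x k ≤ pSum z k} := by
      ext z; simp [Maj, Set.mem_iInter]
    rw [this]
    exact isClosed_iInter fun k => isClosed_le continuous_const (pSum_cont k)
  have hSne : S.Nonempty := ⟨x, hx, fun k => le_refl _⟩
  set f : (Fin n → ℝ) → ℝ := fun z => ∑ k ∈ Finset.range (n + 1), pSum z k with hf
  have hfc : Continuous f := continuous_finset_sum _ fun k _ => pSum_cont k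
  obtain ⟨M, hMS, hMmax⟩ := hSc.exists_isMaxOn hSne hfc.continuousOn
  refine ⟨M, hMS.1, hMS.2, fun z hz hMz => ?_⟩
  have hzS : z ∈ S := ⟨hz, fun k => le_trans (hMS.2 k) (hMz k)⟩
  have hfeq : f M = f z :=
    le_antisymm (Finset.sum_le_sum fun k _ => hMz k) (hMmax hzS)
  have hterm : ∀ k ∈ Finset.range (n + 1), pSum M k = pSum z k := by
    have h0 : ∑ k ∈ Finset.range (n + 1), (pSum z k - pSum M k) = 0 := by
      rw [Finset.sum_sub_distrib]
      simp only [hf] at hfeq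
      linarith
    intro k hk
    have := (Finset.sum_eq_zero_iff_of_nonneg
      (fun k _ => sub_nonneg.mpr (hMz k))).mp h0 k hk
    linarith
  have key : ∀ k ≤ n, pSum M k = pSum z k := fun k hk =>
    hterm k (Finset.mem_range.mpr (Nat.lt_succ_of_le hk))
  funext i
  have h1 : pSum z (i + 1) = pSum z i + z i := by
    have := pSum_succ z i i.2; simpa using this
  have h2 : pSum M (i + 1) = pSum M i + M i := by
    have := pSum_succ M i i.2; simpa using this
  have e1 := key i (le_of_lt i.2)
  have e2 := key (i + 1) i.2
  rw [h1, h2, e1] at e2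
  linarith
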